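/- arXiv:2310.05526 — 6 statements merged into one kernel-verified Lean document; each statement's English description precedes it below -/
import Mathlib

section
/- Let a₁, …, a_ρ (ρ ≥ 1) be positive integers with gcd(a₁, …, a_ρ) = 1, and let m = min_α a_α and M = max_α a_α. Then every integer n ≥ (m − 1)·(M − 1) can be written as n = Σ_{α=1}^{ρ} n_α · a_α with non-negative integers n₁, …, n_ρ. -/
/-!
Let `m` be any element of the generating set and `M` an upper bound for it. Since the gcd is 1,
some sum of generators is congruent to `n` modulo `m`. By pigeonhole on prefix sums in `ZMod m`,
a list of at least `m` generators contains a nonempty block whose sum vanishes modulo `m`;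
deleting such blocks leaves at most `m - 1` generators, hence a sum `y ≤ (m - 1) * M` with
`y ≡ n [MOD m]`. For `n ≥ (m - 1) * (M - 1)` this forces `y ≤ n`, and `n = y + k * m`.
-/

namespace List

variable {G : Type*} [AddMonoid G]

theorem exists_shorter_sublist_sum_eq_of_sum_take_eq {l : List G} {i j : ℕ} (hij : i < j)
    (hj : j ≤ l.length) (h : (l.take i).sum = (l.take j).sum) :
    ∃ l', l' <+ l ∧ l'.length < l.length ∧ l'.sum = l.sum := by
  refine ⟨l.take i ++ l.drop j, ?_, ?_, ?_⟩
  · simpa only [take_append_drop] using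
      (take_sublist_take_left (l := l) hij.le).append_right (l.drop j)
  · simp only [length_append, length_take, length_drop]
    omega
  · rw [sum_append, h, sum_take_add_sum_drop]

theorem exists_shorter_sublist_sum_eq [Fintype G] {l : List G} (h : Fintype.card G ≤ l.length) :
    ∃ l', l' <+ l ∧ l'.length < l.length ∧ l'.sum = l.sum := by
  obtain ⟨i, j, hij, hsum⟩ := Fintype.exists_ne_map_eq_of_card_lt
    (fun k : Fin (l.length + 1) => (l.take k).sum) (by simpa [Nat.lt_succ_iff] using h)
  rcases Fin.lt_or_lt_of_ne hij with hlt | hlt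
  · exact exists_shorter_sublist_sum_eq_of_sum_take_eq hlt (Nat.le_of_lt_succ j.isLt) hsum
  · exact exists_shorter_sublist_sum_eq_of_sum_take_eq hlt (Nat.le_of_lt_succ i.isLt) hsum.symm

theorem exists_sublist_length_lt_card_sum_eq [Fintype G] (l : List G) :
    ∃ l', l' <+ l ∧ l'.length < Fintype.card G ∧ l'.sum = l.sum := by
  induction h : l.length using Nat.strong_induction_on generalizing l with
  | _ n ih =>
    by_cases hl : l.length < Fintype.card G
    · exact ⟨l, Sublist.refl l, hl, rfl⟩
    obtain ⟨l₁, hl₁, hlen, hsum⟩ := exists_shorter_sublist_sum_eq (not_lt.mp hl)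
    obtain ⟨l₂, hl₂, hlen₂, hsum₂⟩ := ih _ (h ▸ hlen) l₁ rfl
    exact ⟨l₂, hl₂.trans hl₁, hlen₂, hsum₂.trans hsum⟩

end List

namespace Nat

theorem le_of_modEq_of_lt_add {m x y : ℕ} (h : x ≡ y [MOD m]) (hx : x < y + m) : x ≤ y := by
  by_contra! hyx
  obtain ⟨k, hk⟩ := (Nat.modEq_iff_dvd' hyx.le).mp h.symm
  rcases k with _ | k
  · omega
  · rw [Nat.mul_succ] at hk
    omega

variable {s : Set ℕ} {m M : ℕ}

theorem exists_mem_closure_modEq_le_mul (hm : 0 < m) (hM : M ∈ upperBounds s) {x : ℕ}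
    (hx : x ∈ AddSubmonoid.closure s) :
    ∃ y ∈ AddSubmonoid.closure s, y ≡ x [MOD m] ∧ y ≤ (m - 1) * M := by
  have : NeZero m := ⟨hm.ne'⟩
  obtain ⟨l, hls, rfl⟩ := AddSubmonoid.exists_list_of_mem_closure hx
  obtain ⟨l', hl', hlen, hsum⟩ :=
    List.exists_sublist_length_lt_card_sum_eq (l.map ((↑) : ℕ → ZMod m))
  obtain ⟨l'', hl'', rfl⟩ := List.sublist_map_iff.mp hl'
  have hl''s : ∀ a ∈ l'', a ∈ s := fun a ha => hls a (hl''.subset ha)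
  refine ⟨l''.sum,
    AddSubmonoid.list_sum_mem _ fun a ha => AddSubmonoid.subset_closure (hl''s a ha), ?_, ?_⟩
  · rw [← ZMod.natCast_eq_natCast_iff, Nat.cast_list_sum, Nat.cast_list_sum, hsum]
  · calc l''.sum ≤ l''.length • M := List.sum_le_card_nsmul _ _ fun a ha => hM (hl''s a ha)
      _ ≤ (m - 1) * M := by
        rw [smul_eq_mul]
        gcongr
        rw [List.length_map, ZMod.card] at hlen
        omega

theorem mem_closure_of_mul_pred_le (hs : setGcd s = 1) (hm : m ∈ s) (hm0 : 0 < m)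
    (hM : M ∈ upperBounds s) {n : ℕ} (hn : (m - 1) * (M - 1) ≤ n) :
    n ∈ AddSubmonoid.closure s := by
  obtain ⟨N, hN⟩ := exists_mem_closure_of_ge s
  have hlarge : n + m * N ∈ AddSubmonoid.closure s :=
    hN _ (by nlinarith) (hs ▸ one_dvd _)
  obtain ⟨y, hy, hyx, hyM⟩ := exists_mem_closure_modEq_le_mul hm0 hM hlarge
  have hyn : y ≡ n [MOD m] := hyx.trans (Nat.add_mul_mod_self_left n m N)
  have hy_le : y ≤ n := by
    refine le_of_modEq_of_lt_add hyn ?_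
    calc y ≤ (m - 1) * M := hyM
      _ ≤ (m - 1) * (M - 1 + 1) := by gcongr; omega
      _ < n + m := by rw [mul_add_one]; omega
  obtain ⟨k, hk⟩ := (Nat.modEq_iff_dvd' hy_le).mp hyn
  rw [← Nat.add_sub_cancel' hy_le, hk]
  exact add_mem hy (mul_comm k m ▸ AddSubmonoid.nsmul_mem _ (AddSubmonoid.subset_closure hm) k)

end Nat

theorem stmt_2_general (ρ : ℕ) (a : Fin ρ → ℕ) (ha : ∀ α, 0 < a α)
    (hgcd : Finset.univ.gcd a = 1) (m M : ℕ)
    (hm : IsLeast (Set.range a) m) (hM : IsGreatest (Set.range a) M) :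
    ∀ n : ℕ, (m - 1) * (M - 1) ≤ n → ∃ c : Fin ρ → ℕ, n = ∑ α, c α * a α := by
  intro n hn
  have hs : Nat.setGcd (Set.range a) = 1 :=
    Nat.dvd_one.mp (hgcd ▸ Finset.dvd_gcd fun α _ => Nat.setGcd_dvd_of_mem ⟨α, rfl⟩)
  have hm0 : 0 < m := by
    obtain ⟨α, hα⟩ := hm.1
    exact hα ▸ ha α
  simpa only [smul_eq_mul] using AddSubmonoid.mem_closure_range_iff_of_fintype.mp
    (Nat.mem_closure_of_mul_pred_le hs hm.1 hm0 hM.2 hn)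

/-- Schur–Brauer bound: for coprime positive integers `a₁, …, a_ρ` with minimum `m`
and maximum `M`, every `n ≥ (m-1)(M-1)` is a non-negative integer combination. -/
theorem stmt_2 (ρ : ℕ) (hρ : 1 ≤ ρ) (a : Fin ρ → ℕ) (ha : ∀ α, 0 < a α)
    (hgcd : Finset.univ.gcd a = 1) (m M : ℕ)
    (hm : IsLeast (Set.range a) m) (hM : IsGreatest (Set.range a) M) :
    ∀ n : ℕ, (m - 1) * (M - 1) ≤ n → ∃ c : Fin ρ → ℕ, n = ∑ α, c α * a α :=
  stmt_2_general ρ a ha hgcd m M hm hM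
end

section
/- Let a₁, …, a_ρ (ρ ≥ 1) be positive integers with g = gcd(a₁, …, a_ρ), and let c be a non-negative integer. If g divides c and c ≥ g · (min_α(a_α/g) − 1) · (max_α(a_α/g) − 1), then there exist non-negative integers n₁, …, n_ρ with c = Σ_{α=1}^{ρ} n_α · a_α. -/
-- Bezout for Finset.gcd over ℕ, with ℤ coefficients
lemma finset_gcd_bezout {ι : Type*} [DecidableEq ι] (s : Finset ι) (f : ι → ℕ) :
    ∃ x : ι → ℤ, ∑ i ∈ s, x i * f i = ((s.gcd f : ℕ) : ℤ) := by
  induction s using Finset.induction_on with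
  | empty => exact ⟨0, by simp⟩
  | @insert a s ha ih =>
    obtain ⟨x, hx⟩ := ih
    refine ⟨fun i => if i = a then Nat.gcdA (f a) (s.gcd f)
      else Nat.gcdB (f a) (s.gcd f) * x i, ?_⟩
    rw [Finset.sum_insert ha, Finset.gcd_insert]
    have h1 : ∑ i ∈ s, (if i = a then Nat.gcdA (f a) (s.gcd f)
        else Nat.gcdB (f a) (s.gcd f) * x i) * f i
        = Nat.gcdB (f a) (s.gcd f) * ∑ i ∈ s, x i * f i := by
      rw [Finset.mul_sum]
      refine Finset.sum_congr rfl fun i hi => ?_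
      rw [if_neg (by rintro rfl; exact ha hi)]
      ring
    simp only [h1, hx, if_pos rfl]
    have := Nat.gcd_eq_gcd_ab (f a) (s.gcd f)
    have h2 : GCDMonoid.gcd (f a) (s.gcd f) = Nat.gcd (f a) (s.gcd f) := rfl
    rw [h2]
    push_cast [this]
    ring

lemma cover_lemma (ρ m : ℕ) [NeZero m] (b : Fin ρ → ℕ)
    (h1 : ∃ n : Fin ρ → ℕ, ((∑ α, n α * b α : ℕ) : ZMod m) = 1) (r : ZMod m) :
    ∃ n : Fin ρ → ℕ, ∑ α, n α ≤ m - 1 ∧ ((∑ α, n α * b α : ℕ) : ZMod m) = r := by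
  classical
  set step : Finset (ZMod m) → Finset (ZMod m) :=
    fun T => T ∪ Finset.univ.biUnion (fun α : Fin ρ => T.image (· + (b α : ZMod m))) with hstep
  set S : ℕ → Finset (ZMod m) := fun j => step^[j] {0} with hS
  have hSsucc : ∀ j, S (j + 1) = step (S j) := by
    intro j; simp [hS, Function.iterate_succ_apply']
  have hmono : ∀ j, S j ⊆ S (j + 1) := by
    intro j; rw [hSsucc]; exact Finset.subset_union_left
  have h0 : ∀ j, (0 : ZMod m) ∈ S j := by
    intro j
    induction j with
    | zero => simp [hS]
    | succ j ih => exact hmono j ih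
  -- representability of elements of S j
  have hrepr : ∀ j, ∀ x ∈ S j, ∃ n : Fin ρ → ℕ,
      ∑ α, n α ≤ j ∧ ((∑ α, n α * b α : ℕ) : ZMod m) = x := by
    intro j
    induction j with
    | zero =>
      intro x hx
      simp only [hS, Function.iterate_zero, id_eq, Finset.mem_singleton] at hx
      exact ⟨0, by simp, by simp [hx]⟩
    | succ j ih =>
      intro x hx
      rw [hSsucc] at hx
      rcases Finset.mem_union.mp hx with hx | hx
      · obtain ⟨n, hn1, hn2⟩ := ih x hx
        exact ⟨n, hn1.trans (Nat.le_succ j), hn2⟩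
      · obtain ⟨α, -, hα⟩ := Finset.mem_biUnion.mp hx
        obtain ⟨y, hy, rfl⟩ := Finset.mem_image.mp hα
        obtain ⟨n, hn1, hn2⟩ := ih y hy
        refine ⟨fun β => n β + if β = α then 1 else 0, ?_, ?_⟩
        · rw [Finset.sum_add_distrib, Finset.sum_ite_eq' Finset.univ α fun _ => 1]
          simp only [Finset.mem_univ, if_pos]
          omega
        · have : ∑ β, (n β + if β = α then 1 else 0) * b β
              = (∑ β, n β * b β) + b α := by
            rw [Finset.sum_congr rfl (fun β _ => add_mul (n β) _ (b β)),
              Finset.sum_add_distrib]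
            congr 1
            simp [ite_mul]
          rw [this, Nat.cast_add, hn2]
  -- closure implies univ
  have hclosed_univ : ∀ j, (step (S j) ⊆ S j) → S j = Finset.univ := by
    intro j hcl
    have hc : ∀ α, ∀ x ∈ S j, x + (b α : ZMod m) ∈ S j := by
      intro α x hx
      refine hcl (Finset.mem_union_right _ ?_)
      exact Finset.mem_biUnion.mpr ⟨α, Finset.mem_univ α,
        Finset.mem_image.mpr ⟨x, hx, rfl⟩⟩
    have closed_mul : ∀ α (k : ℕ), ∀ x ∈ S j, x + ((k * b α : ℕ) : ZMod m) ∈ S j := by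
      intro α k
      induction k with
      | zero => intro x hx; simpa using hx
      | succ k ih =>
        intro x hx
        have h2 := hc α _ (ih x hx)
        have : x + (((k+1) * b α : ℕ) : ZMod m) = x + ((k * b α : ℕ) : ZMod m) + (b α : ZMod m) := by
          push_cast; ring
        rw [this]; exact h2
    have closed_sum : ∀ (k : Fin ρ → ℕ) (s : Finset (Fin ρ)),
        ((∑ α ∈ s, k α * b α : ℕ) : ZMod m) ∈ S j := by
      intro k s
      induction s using Finset.induction_on with
      | empty => simpa using h0 j
      | @insert a s ha ih =>
        rw [Finset.sum_insert ha]
        have : ((k a * b a + ∑ α ∈ s, k α * b α : ℕ) : ZMod m)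
            = ((∑ α ∈ s, k α * b α : ℕ) : ZMod m) + ((k a * b a : ℕ) : ZMod m) := by
          push_cast; ring
        rw [this]
        exact closed_mul a (k a) _ ih
    apply Finset.eq_univ_of_forall
    intro y
    obtain ⟨n, hn⟩ := h1
    have key : ((∑ α, (y.val * n α) * b α : ℕ) : ZMod m) = y := by
      have : (∑ α, (y.val * n α) * b α : ℕ) = y.val * ∑ α, n α * b α := by
        rw [Finset.mul_sum]; exact Finset.sum_congr rfl fun α _ => by ring
      rw [this, Nat.cast_mul, hn, mul_one, ZMod.natCast_val, ZMod.cast_id]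
    rw [← key]
    exact closed_sum _ _
  -- growth
  have hgrow : ∀ j, S j = Finset.univ ∨ j + 1 ≤ (S j).card := by
    intro j
    induction j with
    | zero => right; simp [hS]
    | succ j ih =>
      rcases ih with h | h
      · left
        exact Finset.univ_subset_iff.mp (h ▸ hmono j)
      · by_cases hcl : step (S j) ⊆ S j
        · left
          have := hclosed_univ j hcl
          exact Finset.univ_subset_iff.mp (this ▸ hmono j)
        · right
          have hss : S j ⊂ S (j + 1) := by
            rw [hSsucc]
            exact ⟨Finset.subset_union_left, hcl⟩
          have := Finset.card_lt_card hss
          omega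
  have huniv : S (m - 1) = Finset.univ := by
    rcases hgrow (m - 1) with h | h
    · exact h
    · apply Finset.eq_univ_of_card
      have hm : 0 < m := Nat.pos_of_ne_zero (NeZero.ne m)
      have h2 : (S (m - 1)).card ≤ Fintype.card (ZMod m) := Finset.card_le_univ _
      rw [ZMod.card] at h2 ⊢
      omega
  have hr : r ∈ S (m - 1) := huniv ▸ Finset.mem_univ r
  exact hrepr (m - 1) r hr

/-- Rescaled Schur–Brauer criterion with `g = gcd(a₁, …, a_ρ)`:
if `g ∣ c` and `c ≥ g · (min(a/g) − 1) · (max(a/g) − 1)`, then `c` is a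
non-negative integer combination of the `a α`. -/
theorem stmt_3 (ρ : ℕ) (hρ : 1 ≤ ρ) (a : Fin ρ → ℕ) (ha : ∀ α, 0 < a α)
    (c : ℕ) (hdvd : Finset.univ.gcd a ∣ c) (m M : ℕ)
    (hm : IsLeast (Set.range fun α => a α / Finset.univ.gcd a) m)
    (hM : IsGreatest (Set.range fun α => a α / Finset.univ.gcd a) M)
    (hc : Finset.univ.gcd a * ((m - 1) * (M - 1)) ≤ c) :
    ∃ n : Fin ρ → ℕ, c = ∑ α, n α * a α := by
  classical
  set g := Finset.univ.gcd a with hg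
  set b : Fin ρ → ℕ := fun α => a α / g with hb
  have hα0 : (⟨0, hρ⟩ : Fin ρ) ∈ (Finset.univ : Finset (Fin ρ)) := Finset.mem_univ _
  have hg0 : 0 < g := by
    rcases Nat.eq_zero_or_pos g with h | h
    · exfalso
      have h2 := (Finset.gcd_eq_zero_iff.mp (hg.symm.trans h)) _ hα0
      have h3 := ha ⟨0, hρ⟩
      omega
    · exact h
  have hgdvd : ∀ α, g ∣ a α := fun α => hg ▸ Finset.gcd_dvd (Finset.mem_univ α)
  have hgb : ∀ α, a α = g * b α := fun α => (Nat.mul_div_cancel' (hgdvd α)).symm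
  have hb1 : ∀ α, 1 ≤ b α := fun α =>
    Nat.div_pos (Nat.le_of_dvd (ha α) (hgdvd α)) hg0
  -- gcd of b is 1
  have hgcdb : Finset.univ.gcd b = 1 := by
    rw [hb, hg]
    exact Finset.gcd_div_eq_one hα0 (ha _).ne'
  -- data from hm, hM
  obtain ⟨α₀, hα₀⟩ := hm.1
  have hbα₀ : b α₀ = m := hα₀
  obtain ⟨α₁, hα₁⟩ := hM.1
  have hbM : ∀ α, b α ≤ M := fun α => hM.2 ⟨α, rfl⟩
  have hm1 : 1 ≤ m := hbα₀ ▸ hb1 α₀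
  have hM1 : 1 ≤ M := hα₁ ▸ hb1 α₁
  haveI : NeZero m := ⟨by omega⟩
  -- Bezout and the ZMod hypothesis for cover_lemma
  obtain ⟨x, hx⟩ := finset_gcd_bezout Finset.univ b
  rw [hgcdb] at hx
  have h1 : ∃ n : Fin ρ → ℕ, ((∑ α, n α * b α : ℕ) : ZMod m) = 1 := by
    refine ⟨fun α => (x α % (m : ℤ)).toNat, ?_⟩
    have hcast : ∀ α, (((x α % (m : ℤ)).toNat : ℕ) : ZMod m) = ((x α : ℤ) : ZMod m) := by
      intro α
      have hnn : 0 ≤ x α % (m : ℤ) := Int.emod_nonneg _ (by exact_mod_cast NeZero.ne m)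
      have : (((x α % (m : ℤ)).toNat : ℕ) : ℤ) = x α % (m : ℤ) := Int.toNat_of_nonneg hnn
      calc (((x α % (m : ℤ)).toNat : ℕ) : ZMod m)
          = (((((x α % (m : ℤ)).toNat : ℕ) : ℤ)) : ZMod m) := by push_cast; rfl
        _ = ((x α % (m : ℤ) : ℤ) : ZMod m) := by rw [this]
        _ = ((x α : ℤ) : ZMod m) := ZMod.intCast_mod _ _
    push_cast
    calc ∑ α, ((((x α % (m : ℤ)).toNat : ℕ)) : ZMod m) * (b α : ZMod m)
        = ∑ α, ((x α : ℤ) : ZMod m) * (b α : ZMod m) := by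
          exact Finset.sum_congr rfl fun α _ => by rw [hcast α]
      _ = ((∑ α, x α * (b α : ℤ) : ℤ) : ZMod m) := by push_cast; ring
      _ = 1 := by rw [hx]; norm_num
  -- reduce c
  obtain ⟨c', rfl⟩ := hdvd
  have hc' : (m - 1) * (M - 1) ≤ c' := Nat.le_of_mul_le_mul_left hc hg0
  -- apply cover lemma
  obtain ⟨n, hn1, hn2⟩ := cover_lemma ρ m b h1 ((c' : ZMod m))
  set s := ∑ α, n α * b α with hs
  have hsM : s ≤ (m - 1) * M := by
    calc s ≤ ∑ α, n α * M := Finset.sum_le_sum fun α _ => Nat.mul_le_mul_left _ (hbM α)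
      _ = (∑ α, n α) * M := (Finset.sum_mul _ _ _).symm
      _ ≤ (m - 1) * M := Nat.mul_le_mul_right _ hn1
  have hmod : s ≡ c' [MOD m] := (ZMod.natCast_eq_natCast_iff _ _ _).mp hn2
  have hsplit : (m - 1) * M = (m - 1) * (M - 1) + (m - 1) := by
    have hMe : M - 1 + 1 = M := by omega
    calc (m - 1) * M = (m - 1) * ((M - 1) + 1) := by rw [hMe]
      _ = (m - 1) * (M - 1) + (m - 1) := by ring
  have hsc : s ≤ c' := by
    by_contra hlt
    push_neg at hlt
    have hdvd2 : m ∣ s - c' := (Nat.modEq_iff_dvd' (le_of_lt hlt)).mp hmod.symm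
    have := Nat.le_of_dvd (by omega) hdvd2
    omega
  have hdvd3 : m ∣ c' - s := (Nat.modEq_iff_dvd' hsc).mp hmod
  obtain ⟨k, hk⟩ := hdvd3
  rw [Nat.mul_comm] at hk
  have hc'eq : c' = s + k * m := by omega
  refine ⟨fun β => n β + if β = α₀ then k else 0, ?_⟩
  have hsum : ∑ β, (n β + if β = α₀ then k else 0) * b β = s + k * m := by
    rw [Finset.sum_congr rfl (fun β _ => add_mul (n β) _ (b β)), Finset.sum_add_distrib]
    congr 1
    simp [ite_mul, hbα₀]
  calc g * c' = g * (s + k * m) := by rw [hc'eq]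
    _ = g * ∑ β, (n β + if β = α₀ then k else 0) * b β := by rw [hsum]
    _ = ∑ β, (n β + if β = α₀ then k else 0) * (g * b β) := by
        rw [Finset.mul_sum]; exact Finset.sum_congr rfl fun β _ => by ring
    _ = ∑ β, (n β + if β = α₀ then k else 0) * a β := by
        exact Finset.sum_congr rfl fun β _ => by rw [← hgb β]
end

section
/- Let a₀, a₀' be non-negative integers and let a₁, …, a_μ and a₁', …, a_ν' be positive integers with μ ≥ 1 and ν ≥ 1. Then the equation a₀ + Σ_{α=1}^{μ} n_α · a_α = a₀' + Σ_{β=1}^{ν} n_β' · a_β' has a solution in non-negative integers (n₁, …, n_μ, n₁', …, n_ν') if and only if gcd(a₁, …, a_μ, a₁', …, a_ν') divides a₀ − a₀'. -/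
/-!
Over `ℤ` the statement is Bézout's identity: the integer combinations
`∑ xᵢ aᵢ - ∑ yⱼ bⱼ` are exactly the multiples of `gcd(a, b)`. An integer solution becomes a
non-negative one after adding `k ∑ b` to every `xᵢ` and `k ∑ a` to every `yⱼ` for large `k`:
both sides grow by `k (∑ a) (∑ b)`, which is possible because each side has a positive
coefficient.
-/

open Finset

theorem Int.natCast_finset_gcd {ι : Type*} (s : Finset ι) (f : ι → ℕ) :
    ((s.gcd f : ℕ) : ℤ) = s.gcd fun i => (f i : ℤ) := by
  classical
  induction s using Finset.induction with
  | empty => simp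
  | insert i s hi ih =>
    rw [gcd_insert, gcd_insert, ← ih, ← Int.coe_gcd, Int.gcd_natCast_natCast]
    rfl

section Combinations

variable {ι κ : Type*} [Fintype ι] [Fintype κ] (a : ι → ℕ) (b : κ → ℕ)

theorem exists_sum_mul_sub_sum_mul_eq_iff (t : ℤ) :
    (∃ (x : ι → ℤ) (y : κ → ℤ), ∑ i, x i * a i - ∑ j, y j * b j = t) ↔
      ((Nat.gcd (univ.gcd a) (univ.gcd b) : ℤ) ∣ t) := by
  constructor
  · rintro ⟨x, y, rfl⟩
    refine dvd_sub (dvd_sum fun i _ => dvd_mul_of_dvd_right ?_ _)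
      (dvd_sum fun j _ => dvd_mul_of_dvd_right ?_ _)
    · exact_mod_cast (Nat.gcd_dvd_left _ _).trans (gcd_dvd (mem_univ i))
    · exact_mod_cast (Nat.gcd_dvd_right _ _).trans (gcd_dvd (mem_univ j))
  · rintro ⟨k, rfl⟩
    obtain ⟨u, hu⟩ := gcd_eq_sum_mul univ fun i => (a i : ℤ)
    obtain ⟨v, hv⟩ := gcd_eq_sum_mul univ fun j => (b j : ℤ)
    rw [← Int.natCast_finset_gcd] at hu hv
    set A := univ.gcd a
    set B := univ.gcd b
    refine ⟨fun i => k * Nat.gcdA A B * u i, fun j => -(k * Nat.gcdB A B * v j), ?_⟩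
    rw [Nat.gcd_eq_gcd_ab, hu, hv]
    simp only [sum_mul, neg_mul, sum_neg_distrib, sub_neg_eq_add, add_mul]
    congr 1 <;> exact sum_congr rfl fun _ _ => by ring

theorem exists_nat_sum_mul_sub_sum_mul_eq_iff (ha : ∃ i, 0 < a i) (hb : ∃ j, 0 < b j)
    (t : ℤ) :
    (∃ (n : ι → ℕ) (n' : κ → ℕ), ∑ i, (n i : ℤ) * a i - ∑ j, (n' j : ℤ) * b j = t) ↔
      ∃ (x : ι → ℤ) (y : κ → ℤ), ∑ i, x i * a i - ∑ j, y j * b j = t := by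
  refine ⟨fun ⟨n, n', h⟩ => ⟨fun i => n i, fun j => n' j, h⟩, ?_⟩
  rintro ⟨x, y, rfl⟩
  obtain ⟨i₀, hi₀⟩ := ha
  obtain ⟨j₀, hj₀⟩ := hb
  have hA : 0 < ∑ i, (a i : ℤ) := by exact_mod_cast sum_pos_iff.mpr ⟨i₀, mem_univ i₀, hi₀⟩
  have hB : 0 < ∑ j, (b j : ℤ) := by exact_mod_cast sum_pos_iff.mpr ⟨j₀, mem_univ j₀, hj₀⟩
  set A : ℤ := ∑ i, (a i : ℤ)
  set B : ℤ := ∑ j, (b j : ℤ)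
  set k : ℤ := ∑ i, |x i| + ∑ j, |y j|
  have abs_x_le i : |x i| ≤ k := le_add_of_le_of_nonneg
    (single_le_sum (fun i _ => abs_nonneg (x i)) (mem_univ i)) (sum_nonneg fun j _ => abs_nonneg _)
  have abs_y_le j : |y j| ≤ k := le_add_of_nonneg_of_le
    (sum_nonneg fun i _ => abs_nonneg _) (single_le_sum (fun j _ => abs_nonneg (y j)) (mem_univ j))
  have shift_x_nonneg i : 0 ≤ x i + k * B := by
    nlinarith [neg_abs_le (x i), abs_nonneg (x i), abs_x_le i]
  have shift_y_nonneg j : 0 ≤ y j + k * A := by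
    nlinarith [neg_abs_le (y j), abs_nonneg (y j), abs_y_le j]
  refine ⟨fun i => (x i + k * B).toNat, fun j => (y j + k * A).toNat, ?_⟩
  simp only [Int.toNat_of_nonneg (shift_x_nonneg _), Int.toNat_of_nonneg (shift_y_nonneg _),
    add_mul, sum_add_distrib, ← mul_sum]
  ring

end Combinations

/-- The equation `a₀ + ∑ n α * a α = a₀' + ∑ n' β * b β` has a solution in
non-negative integers iff `gcd(a₁, …, a_μ, a₁', …, a_ν')` divides `a₀ − a₀'`. -/
theorem stmt_4 (a₀ a₀' : ℕ) (μ ν : ℕ) (hμ : 1 ≤ μ) (hν : 1 ≤ ν)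
    (a : Fin μ → ℕ) (b : Fin ν → ℕ) (ha : ∀ α, 0 < a α) (hb : ∀ β, 0 < b β) :
    (∃ (n : Fin μ → ℕ) (n' : Fin ν → ℕ),
        a₀ + ∑ α, n α * a α = a₀' + ∑ β, n' β * b β) ↔
      ((Nat.gcd (Finset.univ.gcd a) (Finset.univ.gcd b) : ℤ) ∣ (a₀ : ℤ) - (a₀' : ℤ)) := by
  have move_constants (n : Fin μ → ℕ) (n' : Fin ν → ℕ) :
      a₀ + ∑ α, n α * a α = a₀' + ∑ β, n' β * b β ↔
        ∑ α, (n α : ℤ) * a α - ∑ β, (n' β : ℤ) * b β = a₀' - a₀ := by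
    zify
    constructor <;> intro h <;> linarith
  simp only [move_constants]
  rw [exists_nat_sum_mul_sub_sum_mul_eq_iff a b ⟨⟨0, hμ⟩, ha _⟩ ⟨⟨0, hν⟩, hb _⟩,
    exists_sum_mul_sub_sum_mul_eq_iff, dvd_sub_comm]
end

section
/- Let a₀, a₀' be non-negative integers, let a₁, …, a_μ and a₁', …, a_ν' be positive integers with μ, ν ≥ 1, write g = gcd(a₁, …, a_μ), g' = gcd(a₁', …, a_ν'), g'' = gcd(g, g'), and let A be the maximum of all the a_α and a_β'. If g'' divides a₀' − a₀, then the cones con(a₀; a₁, …, a_μ) and con(a₀'; a₁', …, a_ν') have a common element D satisfying D ≤ (A² + 1) · max(a₀, a₀') + A · ((A − 1)² + 1). -/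
open Finset

private def reach {μ : ℕ} (c : ℕ) (a : Fin μ → ℕ) : ℕ → Finset (ZMod c)
  | 0 => {0}
  | k + 1 => reach c a k ∪
      Finset.univ.biUnion fun α => (reach c a k).image (· + (a α : ZMod c))

private lemma reach_subset_succ {μ c : ℕ} (a : Fin μ → ℕ) (k : ℕ) :
    reach c a k ⊆ reach c a (k + 1) := by
  rw [reach]; exact Finset.subset_union_left

private lemma zero_mem_reach {μ c : ℕ} (a : Fin μ → ℕ) (k : ℕ) :
    (0 : ZMod c) ∈ reach c a k := by
  induction k with
  | zero => simp [reach]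
  | succ k ih => exact reach_subset_succ a k ih

private lemma sum_addone {μ : ℕ} (a n : Fin μ → ℕ) (α : Fin μ) (t : ℕ) :
    (∑ β, (n β + if β = α then t else 0) * a β) = (∑ β, n β * a β) + t * a α := by
  simp [add_mul, Finset.sum_add_distrib, ite_mul]

private lemma mem_reach {μ c M : ℕ} (a : Fin μ → ℕ) (hM : ∀ α, a α ≤ M) (k : ℕ) :
    ∀ x ∈ reach c a k, ∃ n : Fin μ → ℕ,
      (∑ α, n α * a α) ≤ k * M ∧ ((∑ α, n α * a α : ℕ) : ZMod c) = x := by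
  induction k with
  | zero =>
    intro x hx
    simp only [reach, Finset.mem_singleton] at hx
    exact ⟨0, by simp, by simp [hx]⟩
  | succ k ih =>
    intro x hx
    rw [reach, Finset.mem_union] at hx
    rcases hx with h | h
    · obtain ⟨n, h1, h2⟩ := ih x h
      exact ⟨n, h1.trans (Nat.mul_le_mul_right M (Nat.le_succ k)), h2⟩
    · rw [Finset.mem_biUnion] at h
      obtain ⟨α, -, hα⟩ := h
      rw [Finset.mem_image] at hα
      obtain ⟨y, hy, rfl⟩ := hα
      obtain ⟨n, h1, h2⟩ := ih y hy
      refine ⟨fun β => n β + if β = α then 1 else 0, ?_, ?_⟩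
      · rw [sum_addone, one_mul, Nat.succ_mul]
        exact Nat.add_le_add h1 (hM α)
      · rw [sum_addone, one_mul]
        push_cast at h2 ⊢
        rw [h2]
open Finset

private lemma cast_toNat_emod {c : ℕ} (hc : c ≠ 0) (z : ℤ) :
    (((z % (c : ℤ)).toNat : ℕ) : ZMod c) = ((z : ℤ) : ZMod c) := by
  have hcz : (c : ℤ) ≠ 0 := by exact_mod_cast hc
  have h0 : (0:ℤ) ≤ z % c := Int.emod_nonneg z hcz
  rw [← Int.cast_natCast, Int.toNat_of_nonneg h0]
  exact (ZMod.intCast_eq_intCast_iff _ _ _).mpr (Int.emod_emod_of_dvd z dvd_rfl)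

private lemma gcd_mem_closure {μ c : ℕ} (hc : c ≠ 0) (a : Fin μ → ℕ) (s : Finset (Fin μ)) :
    ((s.gcd a : ℕ) : ZMod c) ∈
      AddSubmonoid.closure (Set.range fun α => ((a α : ℕ) : ZMod c)) := by
  classical
  induction s using Finset.induction with
  | empty => simpa using (AddSubmonoid.closure (Set.range fun α => ((a α : ℕ) : ZMod c))).zero_mem
  | @insert i s hi ih =>
    rw [Finset.gcd_insert]
    show ((Nat.gcd (a i) (s.gcd a) : ℕ) : ZMod c) ∈ _
    set G := s.gcd a with hG
    set u : ℤ := Nat.gcdA (a i) G with hu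
    set v : ℤ := Nat.gcdB (a i) G with hv
    have hbez : (Nat.gcd (a i) G : ℤ) = (a i : ℤ) * u + (G : ℤ) * v := Nat.gcd_eq_gcd_ab _ _
    have key : ((Nat.gcd (a i) G : ℕ) : ZMod c)
        = (u % c).toNat • ((a i : ℕ) : ZMod c) + (v % c).toNat • ((G : ℕ) : ZMod c) := by
      rw [nsmul_eq_mul, nsmul_eq_mul, cast_toNat_emod hc, cast_toNat_emod hc]
      have h2 := congrArg (fun z : ℤ => ((z : ℤ) : ZMod c)) hbez
      push_cast at h2 ⊢
      rw [h2]; ring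
    rw [key]
    have hai : ((a i : ℕ) : ZMod c) ∈
        AddSubmonoid.closure (Set.range fun α => ((a α : ℕ) : ZMod c)) :=
      AddSubmonoid.subset_closure (Set.mem_range_self i)
    exact AddSubmonoid.add_mem _ (AddSubmonoid.nsmul_mem _ hai _) (AddSubmonoid.nsmul_mem _ ih _)

private lemma mem_closure_univ {μ c : ℕ} [NeZero c] (a : Fin μ → ℕ)
    (hg : Finset.univ.gcd a = 1) (x : ZMod c) :
    x ∈ AddSubmonoid.closure (Set.range fun α => ((a α : ℕ) : ZMod c)) := by
  have h1 : ((1:ℕ) : ZMod c) ∈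
      AddSubmonoid.closure (Set.range fun α => ((a α : ℕ) : ZMod c)) :=
    hg ▸ gcd_mem_closure (NeZero.ne c) a Finset.univ
  have hx : x = x.val • ((1:ℕ) : ZMod c) := by
    rw [Nat.cast_one, nsmul_eq_mul, mul_one]
    exact (ZMod.natCast_rightInverse x).symm
  rw [hx]; exact AddSubmonoid.nsmul_mem _ h1 _

private lemma reach_eq_univ {μ c : ℕ} [NeZero c] (a : Fin μ → ℕ)
    (hg : Finset.univ.gcd a = 1) (x : ZMod c) : x ∈ reach c a (c - 1) := by
  classical
  have step : ∀ k, reach c a (k+1) = reach c a k → ∀ y : ZMod c, y ∈ reach c a k := by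
    intro k h y
    let S : AddSubmonoid (ZMod c) :=
      { carrier := {x | ∀ z ∈ reach c a k, z + x ∈ reach c a k}
        zero_mem' := by intro z hz; simpa using hz
        add_mem' := by
          intro p q hp hq z hz
          have := hq _ (hp z hz)
          rwa [add_assoc] at this }
    have hle : AddSubmonoid.closure (Set.range fun α => ((a α : ℕ) : ZMod c)) ≤ S := by
      rw [AddSubmonoid.closure_le]
      rintro _ ⟨α, rfl⟩ z hz
      have h2 : z + (a α : ZMod c) ∈ reach c a (k+1) := by
        rw [reach]
        exact Finset.mem_union_right _ (Finset.mem_biUnion.mpr ⟨α, Finset.mem_univ _,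
          Finset.mem_image.mpr ⟨z, hz, rfl⟩⟩)
      rwa [h] at h2
    have h3 := hle (mem_closure_univ a hg y) 0 (zero_mem_reach a k)
    simpa using h3
  have hcard : ∀ k, min (k+1) c ≤ (reach c a k).card := by
    intro k
    induction k with
    | zero =>
      simp only [reach, Finset.card_singleton]
      omega
    | succ k ih =>
      by_cases h : reach c a (k+1) = reach c a k
      · have huniv : reach c a (k+1) = Finset.univ := by
          rw [h]; exact Finset.eq_univ_of_forall (step k h)
        rw [huniv, Finset.card_univ, ZMod.card]
        exact min_le_right _ _
      · have hss : reach c a k ⊂ reach c a (k+1) :=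
          HasSubset.Subset.ssubset_of_ne (reach_subset_succ a k) (Ne.symm h)
        have h4 := Finset.card_lt_card hss
        omega
  have h1 : (reach c a (c-1)).card = Fintype.card (ZMod c) := by
    have h2 := hcard (c-1)
    have h3 : (reach c a (c-1)).card ≤ Fintype.card (ZMod c) := Finset.card_le_univ _
    have hc : 0 < c := Nat.pos_of_ne_zero (NeZero.ne c)
    rw [ZMod.card] at h3 ⊢
    omega
  rw [Finset.eq_univ_of_card _ h1]
  exact Finset.mem_univ x

private lemma schur1 {μ : ℕ} (a : Fin μ → ℕ) (i₀ : Fin μ) (h0 : 0 < a i₀)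
    (M : ℕ) (hM : ∀ α, a α ≤ M) (hg : Finset.univ.gcd a = 1)
    (m : ℕ) (hm : (a i₀ - 1) * M ≤ m) : ∃ n : Fin μ → ℕ, m = ∑ α, n α * a α := by
  classical
  set c := a i₀ with hc
  haveI : NeZero c := ⟨h0.ne'⟩
  have hx : ((m : ℕ) : ZMod c) ∈ reach c a (c-1) := reach_eq_univ a hg _
  obtain ⟨n, hle, heq⟩ := mem_reach a hM (c-1) _ hx
  have hvm : ∑ α, n α * a α ≤ m := le_trans hle hm
  have hmod : (∑ α, n α * a α) ≡ m [MOD c] := (ZMod.natCast_eq_natCast_iff _ _ _).mp heq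
  have hdvd : c ∣ m - ∑ α, n α * a α := (Nat.modEq_iff_dvd' hvm).mp hmod
  obtain ⟨t, ht⟩ := hdvd
  refine ⟨fun β => n β + if β = i₀ then t else 0, ?_⟩
  rw [sum_addone, mul_comm t (a i₀), ← hc]
  omega

private lemma repr_of_dvd_of_le {μ : ℕ} (hμ : 1 ≤ μ) (a : Fin μ → ℕ) (ha : ∀ α, 0 < a α)
    (A : ℕ) (haA : ∀ α, a α ≤ A) (m : ℕ)
    (hdvd : Finset.univ.gcd a ∣ m) (hm : (A - Finset.univ.gcd a) * A ≤ m) :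
    ∃ n : Fin μ → ℕ, m = ∑ α, n α * a α := by
  classical
  set g := Finset.univ.gcd a with hgdef
  have hgdvd : ∀ α, g ∣ a α := fun α => Finset.gcd_dvd (Finset.mem_univ α)
  have hgpos : 0 < g := Nat.pos_of_ne_zero fun h =>
    (ha ⟨0, hμ⟩).ne' (Finset.gcd_eq_zero_iff.mp h _ (Finset.mem_univ _))
  set a' : Fin μ → ℕ := fun α => a α / g with ha'def
  have hga : ∀ α, a α = g * a' α := fun α => (Nat.mul_div_cancel' (hgdvd α)).symm
  have hg1 : Finset.univ.gcd a' = 1 := by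
    have h1 : Finset.univ.gcd a = g * Finset.univ.gcd a' := by
      have h2 : Finset.univ.gcd a = Finset.univ.gcd (fun α => g * a' α) := by
        congr 1; exact funext hga
      rw [h2]
      simpa using Finset.gcd_mul_left (s := (Finset.univ : Finset (Fin μ))) (f := a') (a := g)
    have h3 : g * 1 = g * Finset.univ.gcd a' := by rw [mul_one, ← h1]
    exact (Nat.eq_of_mul_eq_mul_left hgpos h3).symm
  obtain ⟨m', rfl⟩ := hdvd
  have ha'A : ∀ α, a' α ≤ A := fun α => le_trans (Nat.div_le_self _ _) (haA α)
  have ha'pos : 0 < a' ⟨0, hμ⟩ :=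
    Nat.div_pos (Nat.le_of_dvd (ha _) (hgdvd _)) hgpos
  have hm' : (a' ⟨0, hμ⟩ - 1) * A ≤ m' := by
    have h1 : g * ((a' ⟨0, hμ⟩ - 1) * A) ≤ g * m' := by
      calc g * ((a' ⟨0, hμ⟩ - 1) * A) = (g * (a' ⟨0, hμ⟩ - 1)) * A := by ring
        _ = (g * a' ⟨0, hμ⟩ - g * 1) * A := by rw [Nat.mul_sub]
        _ = (a ⟨0, hμ⟩ - g) * A := by rw [← hga, mul_one]
        _ ≤ (A - g) * A := Nat.mul_le_mul_right _ (Nat.sub_le_sub_right (haA _) _)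
        _ ≤ g * m' := hm
    exact Nat.le_of_mul_le_mul_left h1 hgpos
  obtain ⟨n, hn⟩ := schur1 a' ⟨0, hμ⟩ ha'pos A ha'A hg1 m' hm'
  refine ⟨n, ?_⟩
  calc g * m' = g * ∑ α, n α * a' α := by rw [← hn]
    _ = ∑ α, n α * (g * a' α) := by rw [Finset.mul_sum]; exact Finset.sum_congr rfl fun α _ => by ring
    _ = ∑ α, n α * a α := Finset.sum_congr rfl fun α _ => by rw [← hga]


/-- If `gcd(gcd a, gcd b)` divides `a₀' − a₀`, the affine cones
`con(a₀; a₁, …, a_μ)` and `con(a₀'; a₁', …, a_ν')` have a common element `D`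
with `D ≤ (A²+1)·max(a₀, a₀') + A·((A−1)²+1)`, where `A` is the maximum of all
the generators. -/
theorem stmt_9 (a₀ a₀' : ℕ) (μ ν : ℕ) (hμ : 1 ≤ μ) (hν : 1 ≤ ν)
    (a : Fin μ → ℕ) (b : Fin ν → ℕ) (ha : ∀ α, 0 < a α) (hb : ∀ β, 0 < b β)
    (A : ℕ) (hA : IsGreatest (Set.range a ∪ Set.range b) A)
    (hdvd : ((Nat.gcd (Finset.univ.gcd a) (Finset.univ.gcd b)) : ℤ) ∣
      (a₀' : ℤ) - (a₀ : ℤ)) :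
    ∃ D : ℕ,
      (∃ n : Fin μ → ℕ, D = a₀ + ∑ α, n α * a α) ∧
      (∃ n' : Fin ν → ℕ, D = a₀' + ∑ β, n' β * b β) ∧
      D ≤ (A ^ 2 + 1) * max a₀ a₀' + A * ((A - 1) ^ 2 + 1) := by
  classical
  have haA : ∀ α, a α ≤ A := fun α => hA.2 (Or.inl ⟨α, rfl⟩)
  have hbA : ∀ β, b β ≤ A := fun β => hA.2 (Or.inr ⟨β, rfl⟩)
  set g := Finset.univ.gcd a with hgdef
  set g' := Finset.univ.gcd b with hg'def
  have hgpos : 0 < g := Nat.pos_of_ne_zero fun h =>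
    (ha ⟨0, hμ⟩).ne' (Finset.gcd_eq_zero_iff.mp h _ (Finset.mem_univ _))
  have hg'pos : 0 < g' := Nat.pos_of_ne_zero fun h =>
    (hb ⟨0, hν⟩).ne' (Finset.gcd_eq_zero_iff.mp h _ (Finset.mem_univ _))
  have hgA : g ≤ A :=
    le_trans (Nat.le_of_dvd (ha ⟨0, hμ⟩) (Finset.gcd_dvd (Finset.mem_univ _))) (haA ⟨0, hμ⟩)
  have hg'A : g' ≤ A :=
    le_trans (Nat.le_of_dvd (hb ⟨0, hν⟩) (Finset.gcd_dvd (Finset.mem_univ _))) (hbA ⟨0, hν⟩)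
  have hA1 : 1 ≤ A := le_trans (ha ⟨0, hμ⟩) (haA ⟨0, hμ⟩)
  set m₀ := min g g' with hm₀def
  have hm₀g : m₀ ≤ g := min_le_left _ _
  have hm₀g' : m₀ ≤ g' := min_le_right _ _
  have hm₀A : m₀ ≤ A := le_trans hm₀g hgA
  have hm₀pos : 0 < m₀ := lt_min hgpos hg'pos
  set l := Nat.lcm g g' with hldef
  have hlpos : 0 < l := Nat.pos_of_ne_zero (Nat.lcm_ne_zero hgpos.ne' hg'pos.ne')
  have hlle : l ≤ m₀ * A := by
    have h1 : l ≤ g * g' :=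
      Nat.le_of_dvd (Nat.mul_pos hgpos hg'pos) (Nat.lcm_dvd (dvd_mul_right g g') (dvd_mul_left g' g))
    rcases le_total g g' with h2 | h2
    · have : m₀ = g := min_eq_left h2
      calc l ≤ g * g' := h1
        _ ≤ m₀ * A := by rw [this]; exact Nat.mul_le_mul_left g hg'A
    · have : m₀ = g' := min_eq_right h2
      calc l ≤ g * g' := h1
        _ = g' * g := Nat.mul_comm _ _
        _ ≤ m₀ * A := by rw [this]; exact Nat.mul_le_mul_left g' hgA
  obtain ⟨e, he⟩ := hdvd
  set u := Nat.gcdA g g' with hu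
  set v := Nat.gcdB g g' with hv
  have hbez : (Nat.gcd g g' : ℤ) = g * u + g' * v := Nat.gcd_eq_gcd_ab g g'
  obtain ⟨d, hd⟩ : ∃ d : ℤ, d = (a₀' : ℤ) - a₀ := ⟨_, rfl⟩
  have hde : d = ((g : ℤ) * u + (g' : ℤ) * v) * e := by rw [hd, he, hbez]
  obtain ⟨L, hL⟩ : ∃ L : ℤ, L = (((A - m₀) * A : ℕ) : ℤ) + max d 0 := ⟨_, rfl⟩
  obtain ⟨x₀, hx₀⟩ : ∃ x₀ : ℤ, x₀ = g * u * e := ⟨_, rfl⟩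
  obtain ⟨X, hXdef⟩ : ∃ X : ℤ, X = x₀ - l * ((x₀ - L) / l) := ⟨_, rfl⟩
  have hlZ : (0:ℤ) < l := by exact_mod_cast hlpos
  have hXmod : X - L = (x₀ - L) % l := by rw [hXdef, Int.emod_def]; ring
  have hXge : L ≤ X := by
    have := Int.emod_nonneg (x₀ - L) hlZ.ne'
    linarith [hXmod]
  have hXlt : X < L + l := by
    have := Int.emod_lt_of_pos (x₀ - L) hlZ
    linarith [hXmod]
  have hgl : (g:ℤ) ∣ (l:ℤ) := Int.natCast_dvd_natCast.mpr (Nat.dvd_lcm_left g g')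
  have hg'l : (g':ℤ) ∣ (l:ℤ) := Int.natCast_dvd_natCast.mpr (Nat.dvd_lcm_right g g')
  have hgX : (g:ℤ) ∣ X := by
    rw [hXdef, hx₀]
    exact dvd_sub (Dvd.dvd.mul_right (Dvd.dvd.mul_right dvd_rfl u) e) (hgl.mul_right _)
  have hXd : (g':ℤ) ∣ X - d := by
    have h1 : X - d = (g' : ℤ) * (-(v * e)) - (l:ℤ) * ((x₀ - L) / l) := by
      rw [hXdef, hx₀, hde]; ring
    rw [h1]
    exact dvd_sub (dvd_mul_right _ _) (hg'l.mul_right _)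
  have hLge : ((((A - m₀) * A : ℕ)) : ℤ) ≤ L := by
    rw [hL]; linarith [le_max_right d 0]
  have hX0 : (0:ℤ) ≤ X := le_trans (le_trans (by positivity) hLge) hXge
  have hXdge : ((((A - m₀) * A : ℕ)) : ℤ) ≤ X - d := by
    have h1 : d ≤ max d 0 := le_max_left _ _
    have h2 : L - d ≤ X - d := by linarith [hXge]
    rw [hL] at h2
    linarith
  have hXd0 : (0:ℤ) ≤ X - d := le_trans (by positivity) hXdge
  obtain ⟨Xn, hXndef⟩ : ∃ Xn : ℕ, Xn = X.toNat := ⟨_, rfl⟩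
  obtain ⟨Yn, hYndef⟩ : ∃ Yn : ℕ, Yn = (X - d).toNat := ⟨_, rfl⟩
  have hXnc : (Xn : ℤ) = X := by rw [hXndef]; exact Int.toNat_of_nonneg hX0
  have hYnc : (Yn : ℤ) = X - d := by rw [hYndef]; exact Int.toNat_of_nonneg hXd0
  have hdiff : ((A - g) * A : ℕ) ≤ ((A - m₀) * A : ℕ) :=
    Nat.mul_le_mul_right _ (Nat.sub_le_sub_left hm₀g A)
  have hdiff' : ((A - g') * A : ℕ) ≤ ((A - m₀) * A : ℕ) :=
    Nat.mul_le_mul_right _ (Nat.sub_le_sub_left hm₀g' A)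
  obtain ⟨n, hn⟩ := repr_of_dvd_of_le hμ a ha A haA Xn
    (Int.natCast_dvd_natCast.mp (by rw [hXnc]; exact hgX))
    (by
      have h2 : ((((A - m₀) * A : ℕ)) : ℤ) ≤ (Xn : ℤ) := by rw [hXnc]; exact le_trans hLge hXge
      exact_mod_cast le_trans (Nat.cast_le.mpr hdiff) h2)
  obtain ⟨n', hn'⟩ := repr_of_dvd_of_le hν b hb A hbA Yn
    (Int.natCast_dvd_natCast.mp (by rw [hYnc]; exact hXd))
    (by
      have h2 : ((((A - m₀) * A : ℕ)) : ℤ) ≤ (Yn : ℤ) := by rw [hYnc]; exact hXdge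
      exact_mod_cast le_trans (Nat.cast_le.mpr hdiff') h2)
  refine ⟨a₀ + Xn, ⟨n, by rw [hn]⟩, ⟨n', ?_⟩, ?_⟩
  · have h1 : ((a₀ + Xn : ℕ) : ℤ) = ((a₀' + Yn : ℕ) : ℤ) := by
      push_cast
      rw [hXnc, hYnc, hd]; ring
    rw [← hn']
    exact_mod_cast h1
  · -- final bound
    have hmx0 : (0:ℤ) ≤ max (a₀:ℤ) (a₀':ℤ) := le_trans (by positivity) (le_max_left _ _)
    have hmaxd : (a₀ : ℤ) + max d 0 = max (a₀:ℤ) (a₀':ℤ) := by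
      rw [hd]
      rcases le_total (a₀:ℤ) (a₀':ℤ) with h | h
      · rw [max_eq_right h, max_eq_left (by linarith)]; ring
      · rw [max_eq_right (by linarith : (a₀':ℤ) - a₀ ≤ 0), max_eq_left h]; ring
    have hAm : ((((A - m₀) * A : ℕ)) : ℤ) = ((A:ℤ) - m₀) * A := by
      push_cast [hm₀A]; ring
    have hA1' : (1:ℤ) ≤ (A:ℤ) := by exact_mod_cast hA1
    have hm₀1 : (1:ℤ) ≤ (m₀:ℤ) := by exact_mod_cast hm₀pos
    have hm₀A' : (m₀:ℤ) ≤ (A:ℤ) := by exact_mod_cast hm₀A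
    have hll : (l:ℤ) ≤ (m₀:ℤ) * A := by exact_mod_cast hlle
    have hXle : (Xn : ℤ) ≤ L + l - 1 := by rw [hXnc]; linarith [hXlt]
    have key2 : (a₀:ℤ) + Xn ≤ max (a₀:ℤ) (a₀':ℤ) + (A:ℤ)^2 - 1 := by
      have h5 : L = ((A:ℤ) - m₀) * A + max d 0 := by rw [hL, hAm]
      linarith [hXle, hll, hmaxd, h5]
    have goalZ : (a₀:ℤ) + Xn ≤ ((A:ℤ)^2+1) * max (a₀:ℤ) (a₀':ℤ) + (A:ℤ) * (((A:ℤ)-1)^2 + 1) := by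
      rcases le_or_gt 2 (A:ℤ) with h2 | h2
      · have hprod : (0:ℤ) ≤ (A:ℤ) * ((A:ℤ)-1) * ((A:ℤ)-2) :=
          mul_nonneg (mul_nonneg (by linarith) (by linarith)) (by linarith)
        have h3 : (0:ℤ) ≤ (A:ℤ)^2 * max (a₀:ℤ) (a₀':ℤ) := mul_nonneg (sq_nonneg _) hmx0
        linarith [key2, hprod, h3]
      · have hAe : (A:ℤ) = 1 := by omega
        rw [hAe] at key2 ⊢
        linarith [key2, hmx0]
    have final : ((a₀ + Xn : ℕ) : ℤ) ≤
        (((A ^ 2 + 1) * max a₀ a₀' + A * ((A - 1) ^ 2 + 1) : ℕ) : ℤ) := by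
      push_cast [Nat.cast_sub hA1, Nat.cast_max]
      linarith [goalZ]
    exact_mod_cast final
end

section
/- Let G be a directed graph on vertex set V × ℤ (with V finite) that is time-ordered and has repeating edges, and suppose G contains the edge (i, s−1) → (i, s) for all i ∈ V and s ∈ ℤ. Define the summary graph S(G) on vertex set V by: i → j is an edge in S(G) iff there exists τ ≥ 0 with (i, t−τ) → (j, t) an edge in G. If the vertices i and j have a common ancestor in S(G), then for every non-negative integer τ, the vertices (i, t−τ) and (j, t) have a common ancestor in G. -/
private lemma aux_self {V : Type*} (E : (V × ℤ) → (V × ℤ) → Prop)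
    (hself : ∀ (i : V) (s : ℤ), E (i, s - 1) (i, s)) (k : V) {m s : ℤ} (h : m ≤ s) :
    Relation.ReflTransGen E (k, m) (k, s) := by
  obtain ⟨n, rfl⟩ := Int.le.dest h
  clear h
  induction n with
  | zero => simpa using Relation.ReflTransGen.refl
  | succ n ih =>
      refine ih.tail ?_
      have := hself k (m + (n + 1 : ℕ))
      have h2 : m + (↑(n+1):ℤ) - 1 = m + n := by push_cast; ring
      rw [h2] at this
      simpa using this

private lemma aux_reach {V : Type*} (E : (V × ℤ) → (V × ℤ) → Prop)
    (hrep : ∀ (Δ : ℤ) (i : V) (s : ℤ) (j : V) (u : ℤ),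
      E (i, s) (j, u) ↔ E (i, s + Δ) (j, u + Δ))
    {k x : V}
    (h : Relation.ReflTransGen (fun x y : V => ∃ τ : ℕ, E (x, 0 - (τ : ℤ)) (y, 0)) k x) :
    ∀ s : ℤ, ∃ s' ≤ s, Relation.ReflTransGen E (k, s') (x, s) := by
  induction h with
  | refl => exact fun s => ⟨s, le_refl s, .refl⟩
  | tail _ hxy ih =>
      rename_i b c _
      intro s
      obtain ⟨τ, hE⟩ := hxy
      have hE' : E (b, s - τ) (c, s) := by
        have := (hrep s b (0 - τ) c 0).mp hE
        simpa [zero_add, sub_eq_neg_add, add_comm] using this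
      obtain ⟨s', hs', hpath⟩ := ih (s - τ)
      exact ⟨s', le_trans hs' (by omega), hpath.tail hE'⟩

/-- With lag-1 auto-dependencies everywhere, common ancestorship of `i` and `j`
in the summary graph implies common ancestorship of `(i, t−τ)` and `(j, t)` in
the time series graph, for every `t` and every non-negative `τ`. -/
theorem stmt_14 {V : Type*} [Fintype V] (E : (V × ℤ) → (V × ℤ) → Prop)
    (hord : ∀ v w : V × ℤ, E v w → v.2 ≤ w.2)
    (hrep : ∀ (Δ : ℤ) (i : V) (s : ℤ) (j : V) (u : ℤ),
      E (i, s) (j, u) ↔ E (i, s + Δ) (j, u + Δ))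
    (hself : ∀ (i : V) (s : ℤ), E (i, s - 1) (i, s))
    (i j : V)
    (hca : ∃ k : V,
      Relation.ReflTransGen (fun x y : V => ∃ τ : ℕ, E (x, 0 - (τ : ℤ)) (y, 0)) k i ∧
      Relation.ReflTransGen (fun x y : V => ∃ τ : ℕ, E (x, 0 - (τ : ℤ)) (y, 0)) k j) :
    ∀ (t : ℤ) (τ : ℕ), ∃ v : V × ℤ,
      Relation.ReflTransGen E v (i, t - (τ : ℤ)) ∧
      Relation.ReflTransGen E v (j, t) := by
  obtain ⟨k, hki, hkj⟩ := hca
  intro t τ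
  obtain ⟨s1, hs1, p1⟩ := aux_reach E hrep hki (t - τ)
  obtain ⟨s2, hs2, p2⟩ := aux_reach E hrep hkj t
  refine ⟨(k, min s1 s2), ?_, ?_⟩
  · exact (aux_self E hself k (min_le_left s1 s2)).trans p1
  · exact (aux_self E hself k (min_le_right s1 s2)).trans p2
end

section
/- Let π be a directed walk in a directed graph that contains at least one subcycle, and let b be the minimal index such that the initial segment π(1, b) contains an irreducible subcycle. Then π(1, b) contains exactly one irreducible subcycle, and this subcycle ends at π(b). -/
/-- `IrrSubcycle π a b` says that the indices `a < b` bound an irreducible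
subcycle of the walk `π`: the endpoints coincide and the segment contains no
other subcycle. -/
def IrrSubcycle {V : Type*} (π : ℕ → V) (a b : ℕ) : Prop :=
  a < b ∧ π a = π b ∧
    ∀ a' b' : ℕ, a ≤ a' → a' < b' → b' ≤ b → π a' = π b' → a' = a ∧ b' = b

/-- If `b` is the minimal index such that the initial segment of the walk `π`
up to `b` contains an irreducible subcycle, then this segment contains exactly
one irreducible subcycle, and that subcycle ends at `π b`. -/
theorem stmt_17 {V : Type*} (N : ℕ) (E : V → V → Prop) (π : ℕ → V)
    (hwalk : ∀ m : ℕ, m < N → E (π m) (π (m + 1)))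
    (b : ℕ) (hb : b ≤ N)
    (hex : ∃ a' b' : ℕ, b' ≤ b ∧ IrrSubcycle π a' b')
    (hmin : ∀ b₀ : ℕ, b₀ < b → ¬ ∃ a' b' : ℕ, b' ≤ b₀ ∧ IrrSubcycle π a' b') :
    (∃! p : ℕ × ℕ, p.2 ≤ b ∧ IrrSubcycle π p.1 p.2) ∧
    (∀ a' b' : ℕ, b' ≤ b → IrrSubcycle π a' b' → b' = b) := by
  have hend : ∀ a' b' : ℕ, b' ≤ b → IrrSubcycle π a' b' → b' = b := by
    intro a' b' hle h
    by_contra hne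
    exact hmin b' (lt_of_le_of_ne hle hne) ⟨a', b', le_rfl, h⟩
  refine ⟨?_, hend⟩
  obtain ⟨a₀, b₀, hle₀, h₀⟩ := hex
  have hb₀ : b₀ = b := hend a₀ b₀ hle₀ h₀
  subst hb₀
  refine ⟨(a₀, b₀), ⟨le_rfl, h₀⟩, ?_⟩
  rintro ⟨a₁, b₁⟩ ⟨hle₁, h₁⟩
  have hb₁ : b₁ = b₀ := hend a₁ b₁ hle₁ h₁
  subst hb₁
  have ha : a₁ = a₀ := by
    rcases le_total a₀ a₁ with h | h
    · exact (h₀.2.2 a₁ b₁ h h₁.1 le_rfl h₁.2.1).1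
    · exact ((h₁.2.2 a₀ b₁ h h₀.1 le_rfl h₀.2.1).1).symm
  simp [ha]
end
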